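/- Let a ≥ 0 and let x, y : ℕ → ℝ satisfy 0 ≤ x_m ≤ a^m and 0 ≤ y_n ≤ a^n for all m, n ∈ ℕ. Then Σ_{ℓ,ℓ′=0}^{∞} (1/(ℓ! ℓ′!)) Σ ((m̃+ñ)!/((m−ℓ)! n! (m̃−ℓ′)! ñ!)) x_m y_n ≤ e^{16a}, where the inner sum runs over all (m, n, m̃, ñ) ∈ ℕ⁴ with m ≥ ℓ, m̃ ≥ ℓ′ and m + n = m̃ + ñ (in particular the whole family is summable). -/
import Mathlib


/-- The summand of Lemma D.6: for a sextuple `(ℓ, ℓ', m, n, m̃, ñ)`,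
`(1/(ℓ! ℓ'!)) * ((m̃+ñ)! / ((m-ℓ)! n! (m̃-ℓ')! ñ!)) * x m * y n`. -/
noncomputable def summandD6 (x y : ℕ → ℝ) : ℕ × ℕ × ℕ × ℕ × ℕ × ℕ → ℝ :=
  fun (l, l', m, n, mt, nt) =>
    1 / ((l.factorial : ℝ) * (l'.factorial : ℝ)) *
      (((mt + nt).factorial : ℝ) /
        (((m - l).factorial : ℝ) * (n.factorial : ℝ) * ((mt - l').factorial : ℝ) *
          (nt.factorial : ℝ))) * x m * y n

/-- Index condition of Lemma D.6: `ℓ ≤ m`, `ℓ' ≤ m̃` and `m + n = m̃ + ñ`. -/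
def condD6 : ℕ × ℕ × ℕ × ℕ × ℕ × ℕ → Prop :=
  fun (l, l', m, n, mt, nt) => l ≤ m ∧ l' ≤ mt ∧ m + n = mt + nt

/-! ### Auxiliary lemmas -/

private lemma natTrinomD6 {S l n : ℕ} (hl : l ≤ S) (hn : n ≤ S - l) :
    S.choose l * (S - l).choose n * (l.factorial * (n.factorial * (S - l - n).factorial))
      = S.factorial := by
  have h1 := Nat.choose_mul_factorial_mul_factorial hl
  have h2 := Nat.choose_mul_factorial_mul_factorial hn
  calc S.choose l * (S - l).choose n * (l.factorial * (n.factorial * (S - l - n).factorial))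
      = (S.choose l * l.factorial) * ((S - l).choose n * n.factorial * (S - l - n).factorial) := by
        ring
    _ = S.choose l * l.factorial * (S - l).factorial := by rw [h2]
    _ = S.factorial := by rw [← h1]

private lemma combIdentD6 (l l' m n mt nt : ℕ) (hl : l ≤ m) (hl' : l' ≤ mt)
    (hS : m + n = mt + nt) :
    1 / ((l.factorial : ℝ) * (l'.factorial : ℝ)) *
      (((mt + nt).factorial : ℝ) /
        (((m - l).factorial : ℝ) * (n.factorial : ℝ) * ((mt - l').factorial : ℝ) *
          (nt.factorial : ℝ)))
    = (((m+n).choose l * (m+n-l).choose n : ℕ) : ℝ)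
        * (((m+n).choose l' * (m+n-l').choose nt : ℕ) : ℝ) / ((m+n).factorial : ℝ) := by
  set S := m + n with hSdef
  have h1 : S.choose l * (S - l).choose n * (l.factorial * (n.factorial * (m - l).factorial))
      = S.factorial := by
    have := natTrinomD6 (S := S) (l := l) (n := n) (by omega) (by omega)
    rwa [show S - l - n = m - l by omega] at this
  have h2 : S.choose l' * (S - l').choose nt
        * (l'.factorial * (nt.factorial * (mt - l').factorial)) = S.factorial := by
    have := natTrinomD6 (S := S) (l := l') (n := nt) (by omega) (by omega)
    rwa [show S - l' - nt = mt - l' by omega] at this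
  have c1 : ((S.choose l * (S - l).choose n : ℕ) : ℝ)
      = (S.factorial : ℝ) / ((l.factorial : ℝ) * (n.factorial : ℝ) * ((m - l).factorial : ℝ)) := by
    rw [eq_div_iff (by positivity)]
    push_cast [← h1]; ring
  have c2 : ((S.choose l' * (S - l').choose nt : ℕ) : ℝ)
      = (S.factorial : ℝ)
        / ((l'.factorial : ℝ) * (nt.factorial : ℝ) * ((mt - l').factorial : ℝ)) := by
    rw [eq_div_iff (by positivity)]
    push_cast [← h2]; ring
  rw [c1, c2, show mt + nt = S by omega]
  field_simp

/-- The binomial weight `C(S,ℓ)·C(S-ℓ,n)` as a real-valued function of `(ℓ, n)`. -/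
noncomputable def hD6 (S : ℕ) : ℕ × ℕ → ℝ :=
  fun p => ((S.choose p.1 * (S - p.1).choose p.2 : ℕ) : ℝ)

private lemma hD6_nonneg (S : ℕ) (p : ℕ × ℕ) : 0 ≤ hD6 S p := Nat.cast_nonneg _

private lemma hD6_zero (S : ℕ) (p : ℕ × ℕ)
    (hp : p ∉ Finset.range (S+1) ×ˢ Finset.range (S+1)) : hD6 S p = 0 := by
  simp only [Finset.mem_product, Finset.mem_range, not_and_or, not_lt] at hp
  rcases hp with h | h
  · have : S.choose p.1 = 0 := Nat.choose_eq_zero_of_lt (by omega)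
    simp [hD6, this]
  · have : (S - p.1).choose p.2 = 0 := Nat.choose_eq_zero_of_lt (by omega)
    simp [hD6, this]

private lemma hD6_summable (S : ℕ) : Summable (hD6 S) :=
  summable_of_ne_finset_zero (fun p hp => hD6_zero S p hp)

private lemma hD6_tsum (S : ℕ) : ∑' p, hD6 S p = 3 ^ S := by
  rw [tsum_eq_sum (fun p hp => hD6_zero S p hp)]
  rw [Finset.sum_product]
  have key : ∑ l ∈ Finset.range (S+1), ∑ n ∈ Finset.range (S+1),
      S.choose l * (S-l).choose n = 3^S := by
    have inner : ∀ l ∈ Finset.range (S+1),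
        ∑ n ∈ Finset.range (S+1), (S-l).choose n = 2^(S-l) := by
      intro l hl
      rw [← Nat.sum_range_choose (S-l)]
      refine (Finset.sum_subset (Finset.range_subset_range.mpr (by simp at hl; omega)) ?_).symm
      intro x _ hx
      exact Nat.choose_eq_zero_of_lt (by simp at hx; omega)
    calc ∑ l ∈ Finset.range (S+1), ∑ n ∈ Finset.range (S+1), S.choose l * (S-l).choose n
        = ∑ l ∈ Finset.range (S+1), S.choose l * 2^(S-l) := by
          refine Finset.sum_congr rfl fun l hl => ?_
          rw [← Finset.mul_sum, inner l hl]
      _ = 3^S := by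
          have := add_pow 1 2 S (R := ℕ)
          simp only [one_pow, one_mul] at this
          rw [show (3:ℕ) = 1 + 2 by norm_num, this]
          exact Finset.sum_congr rfl fun l _ => by simp [mul_comm]
  calc ∑ l ∈ Finset.range (S+1), ∑ n ∈ Finset.range (S+1), hD6 S (l, n)
      = ((∑ l ∈ Finset.range (S+1), ∑ n ∈ Finset.range (S+1),
          S.choose l * (S-l).choose n : ℕ) : ℝ) := by push_cast [hD6]; rfl
    _ = 3^S := by rw [key]; push_cast; ring

/-- The doubled binomial weight on `(ℕ × ℕ) × (ℕ × ℕ)`. -/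
noncomputable def KD6 (S : ℕ) : (ℕ × ℕ) × (ℕ × ℕ) → ℝ := fun p => hD6 S p.1 * hD6 S p.2

private lemma KD6_nonneg (S : ℕ) (p : (ℕ × ℕ) × (ℕ × ℕ)) : 0 ≤ KD6 S p :=
  mul_nonneg (hD6_nonneg S p.1) (hD6_nonneg S p.2)

private lemma KD6_summable (S : ℕ) : Summable (KD6 S) :=
  (hD6_summable S).mul_of_nonneg (hD6_summable S)
    (fun p => hD6_nonneg S p) (fun p => hD6_nonneg S p)

set_option maxHeartbeats 800000 in
private lemma KD6_tsum (S : ℕ) : ∑' p, KD6 S p = 9 ^ S := by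
  rw [Summable.tsum_prod' (KD6_summable S) (fun b => ((hD6_summable S).mul_left (hD6 S b)))]
  simp only [KD6]
  calc ∑' (a : ℕ × ℕ), ∑' (b : ℕ × ℕ), hD6 S a * hD6 S b
      = ∑' (a : ℕ × ℕ), hD6 S a * ∑' (b : ℕ × ℕ), hD6 S b :=
        tsum_congr fun a => tsum_mul_left
    _ = (∑' (a : ℕ × ℕ), hD6 S a) * (∑' (b : ℕ × ℕ), hD6 S b) := tsum_mul_right
    _ = 9 ^ S := by rw [hD6_tsum, ← mul_pow]; norm_num

/-- The majorant `a^S/S! · C(S,ℓ)C(S-ℓ,n) · C(S,ℓ')C(S-ℓ',ñ)` on `ℕ × ((ℕ×ℕ) × (ℕ×ℕ))`. -/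
noncomputable def FD6 (a : ℝ) : ℕ × ((ℕ × ℕ) × (ℕ × ℕ)) → ℝ :=
  fun p => a ^ p.1 / (p.1.factorial : ℝ) * KD6 p.1 p.2

private lemma FD6_nonneg {a : ℝ} (ha : 0 ≤ a) (p : ℕ × ((ℕ × ℕ) × (ℕ × ℕ))) : 0 ≤ FD6 a p :=
  mul_nonneg (div_nonneg (pow_nonneg ha _) (Nat.cast_nonneg _)) (KD6_nonneg _ _)

private lemma FD6_fiber_summable (a : ℝ) (S : ℕ) : Summable (fun p => FD6 a (S, p)) :=
  (KD6_summable S).mul_left (a ^ S / (S.factorial : ℝ))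

private lemma FD6_fiber_tsum (a : ℝ) (S : ℕ) :
    ∑' p, FD6 a (S, p) = (9 * a) ^ S / (S.factorial : ℝ) := by
  simp only [FD6]
  rw [tsum_mul_left, KD6_tsum, mul_pow]
  ring

private lemma FD6_summable {a : ℝ} (ha : 0 ≤ a) : Summable (FD6 a) := by
  rw [summable_prod_of_nonneg (fun p => FD6_nonneg ha p)]
  refine ⟨FD6_fiber_summable a, ?_⟩
  have : (fun S => ∑' p, FD6 a (S, p)) = fun S => (9 * a) ^ S / (S.factorial : ℝ) := by
    funext S; exact FD6_fiber_tsum a S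
  rw [this]
  exact Real.summable_pow_div_factorial (9 * a)

private lemma FD6_tsum_le {a : ℝ} (ha : 0 ≤ a) : ∑' p, FD6 a p ≤ Real.exp (16 * a) := by
  rw [Summable.tsum_prod' (FD6_summable ha) (FD6_fiber_summable a)]
  have heq : (fun S => ∑' p, FD6 a (S, p)) = fun S => (9 * a) ^ S / (S.factorial : ℝ) := by
    funext S; exact FD6_fiber_tsum a S
  rw [show (∑' (S : ℕ) (p : (ℕ × ℕ) × (ℕ × ℕ)), FD6 a (S, p))
      = ∑' (S : ℕ), (9 * a) ^ S / (S.factorial : ℝ) from congrArg tsum heq]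
  refine Real.tsum_le_of_sum_range_le (fun S => by positivity) (fun N => ?_)
  calc ∑ S ∈ Finset.range N, (9 * a) ^ S / (S.factorial : ℝ)
      ≤ ∑ S ∈ Finset.range N, (16 * a) ^ S / (S.factorial : ℝ) := by
        refine Finset.sum_le_sum fun S _ => ?_
        gcongr <;> linarith
    _ ≤ Real.exp (16 * a) := Real.sum_le_exp_of_nonneg (by linarith) N

/-- The injection of the constrained index set into `ℕ × ((ℕ×ℕ) × (ℕ×ℕ))`:
`(ℓ, ℓ', m, n, m̃, ñ) ↦ (m + n, ((ℓ, n), (ℓ', ñ)))`. -/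
def iD6 : {q : ℕ × ℕ × ℕ × ℕ × ℕ × ℕ // condD6 q} → ℕ × ((ℕ × ℕ) × (ℕ × ℕ)) :=
  fun q => (q.1.2.2.1 + q.1.2.2.2.1, ((q.1.1, q.1.2.2.2.1), (q.1.2.1, q.1.2.2.2.2.2)))

private lemma iD6_injective : Function.Injective iD6 := by
  rintro ⟨⟨l1, l1', m1, n1, mt1, nt1⟩, hc1⟩ ⟨⟨l2, l2', m2, n2, mt2, nt2⟩, hc2⟩ h
  obtain ⟨_, _, h1⟩ := hc1
  obtain ⟨_, _, h2⟩ := hc2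
  simp only [iD6, Prod.mk.injEq] at h
  obtain ⟨hS, ⟨hl, hn⟩, hl', hnt⟩ := h
  have hm : m1 = m2 := by omega
  have hmt : mt1 = mt2 := by omega
  subst hl hn hl' hnt hm hmt
  rfl

private lemma summand_le {a : ℝ} (ha : 0 ≤ a) {x y : ℕ → ℝ}
    (hx0 : ∀ m, 0 ≤ x m) (hxa : ∀ m, x m ≤ a ^ m)
    (hy0 : ∀ n, 0 ≤ y n) (hya : ∀ n, y n ≤ a ^ n)
    (q : {q : ℕ × ℕ × ℕ × ℕ × ℕ × ℕ // condD6 q}) :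
    summandD6 x y q.1 ≤ FD6 a (iD6 q) := by
  obtain ⟨⟨l, l', m, n, mt, nt⟩, hl, hl', hS⟩ := q
  show 1 / ((l.factorial : ℝ) * (l'.factorial : ℝ)) *
      (((mt + nt).factorial : ℝ) /
        (((m - l).factorial : ℝ) * (n.factorial : ℝ) * ((mt - l').factorial : ℝ) *
          (nt.factorial : ℝ))) * x m * y n
    ≤ a ^ (m + n) / ((m + n).factorial : ℝ) * (hD6 (m + n) (l, n) * hD6 (m + n) (l', nt))
  rw [mul_assoc]
  rw [combIdentD6 l l' m n mt nt hl hl' hS]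
  have hC : (0:ℝ) ≤ (((m+n).choose l * (m+n-l).choose n : ℕ) : ℝ)
      * (((m+n).choose l' * (m+n-l').choose nt : ℕ) : ℝ) / ((m+n).factorial : ℝ) := by
    positivity
  have hxy : x m * y n ≤ a ^ (m + n) := by
    calc x m * y n ≤ a ^ m * a ^ n :=
          mul_le_mul (hxa m) (hya n) (hy0 n) (pow_nonneg ha m)
      _ = a ^ (m + n) := (pow_add a m n).symm
  calc (((m+n).choose l * (m+n-l).choose n : ℕ) : ℝ)
        * (((m+n).choose l' * (m+n-l').choose nt : ℕ) : ℝ) / ((m+n).factorial : ℝ)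
        * (x m * y n)
      ≤ (((m+n).choose l * (m+n-l).choose n : ℕ) : ℝ)
          * (((m+n).choose l' * (m+n-l').choose nt : ℕ) : ℝ) / ((m+n).factorial : ℝ)
          * a ^ (m + n) := by
        refine mul_le_mul_of_nonneg_left ?_ hC
        exact hxy
    _ = a ^ (m + n) / ((m + n).factorial : ℝ)
          * (hD6 (m + n) (l, n) * hD6 (m + n) (l', nt)) := by
        simp only [hD6]
        ring

private lemma summand_nonneg {x y : ℕ → ℝ} (hx0 : ∀ m, 0 ≤ x m) (hy0 : ∀ n, 0 ≤ y n)
    (q : ℕ × ℕ × ℕ × ℕ × ℕ × ℕ) : 0 ≤ summandD6 x y q := by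
  obtain ⟨l, l', m, n, mt, nt⟩ := q
  have h1 : (0:ℝ) ≤ 1 / ((l.factorial : ℝ) * (l'.factorial : ℝ)) := by positivity
  have h2 : (0:ℝ) ≤ ((mt + nt).factorial : ℝ) /
      (((m - l).factorial : ℝ) * (n.factorial : ℝ) * ((mt - l').factorial : ℝ)
        * (nt.factorial : ℝ)) := by positivity
  exact mul_nonneg (mul_nonneg (mul_nonneg h1 h2) (hx0 m)) (hy0 n)

/-- Lemma D.6 ('summation-ell'): if `0 ≤ x m ≤ a^m` and `0 ≤ y n ≤ a^n`, then
`∑_{ℓ,ℓ'} (1/(ℓ! ℓ'!)) ∑ ((m̃+ñ)!/((m-ℓ)! n! (m̃-ℓ')! ñ!)) x_m y_n ≤ e^{16a}`, the inner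
sum over `(m, n, m̃, ñ)` with `m ≥ ℓ`, `m̃ ≥ ℓ'` and `m + n = m̃ + ñ`. -/
theorem summation_ell_lemma (a : ℝ) (ha : 0 ≤ a) (x y : ℕ → ℝ)
    (hx0 : ∀ m, 0 ≤ x m) (hxa : ∀ m, x m ≤ a ^ m)
    (hy0 : ∀ n, 0 ≤ y n) (hya : ∀ n, y n ≤ a ^ n) :
    Summable (fun q : {q : ℕ × ℕ × ℕ × ℕ × ℕ × ℕ // condD6 q} => summandD6 x y q.1) ∧
    ∑' q : {q : ℕ × ℕ × ℕ × ℕ × ℕ × ℕ // condD6 q},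
      summandD6 x y q.1 ≤ Real.exp (16 * a) := by
  have hFs : Summable (FD6 a) := FD6_summable ha
  have hcomp : Summable (FD6 a ∘ iD6) := hFs.comp_injective iD6_injective
  have hle := summand_le ha hx0 hxa hy0 hya
  have hs : Summable (fun q : {q : ℕ × ℕ × ℕ × ℕ × ℕ × ℕ // condD6 q} => summandD6 x y q.1) :=
    Summable.of_nonneg_of_le (fun q => summand_nonneg hx0 hy0 q.1) hle hcomp
  refine ⟨hs, ?_⟩
  calc ∑' q : {q : ℕ × ℕ × ℕ × ℕ × ℕ × ℕ // condD6 q}, summandD6 x y q.1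
      ≤ ∑' p, FD6 a p :=
        Summable.tsum_le_tsum_of_inj iD6 iD6_injective (fun c _ => FD6_nonneg ha c) hle hs hFs
    _ ≤ Real.exp (16 * a) := FD6_tsum_le ha
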